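/- arXiv:1810.02438 — 3 statements merged into one kernel-verified Lean document; each statement's English description precedes it below -/
import Mathlib

section
/- Classical Bayesian Inference Theorem, forward direction: Let X, Y be finite types and τ a state on X × Y with M₁(τ) everywhere nonzero, and let c := extr(τ). For a predicate p on X with τ ⊨ (p ⊗ 1) ≠ 0, the second marginal of τ conditioned by p ⊗ 1 equals the forward-transformed conditioned first marginal: M₂(τ|_{p ⊗ 1}) = c ≫ (M₁(τ)|_p). -/
noncomputable section

/-- Validity `ω ⊨ p`. -/
def valid {X : Type*} [Fintype X] (ω p : X → ℝ) : ℝ := ∑ x, ω x * p x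

/-- Conditioning `ω|_p`. -/
def stCond {X : Type*} [Fintype X] (ω p : X → ℝ) : X → ℝ :=
  fun x => ω x * p x / valid ω p

/-- First marginal of a joint state. -/
def M1 {X Y : Type*} [Fintype Y] (τ : X × Y → ℝ) : X → ℝ := fun x => ∑ y, τ (x, y)

/-- Second marginal of a joint state. -/
def M2 {X Y : Type*} [Fintype X] (τ : X × Y → ℝ) : Y → ℝ := fun y => ∑ x, τ (x, y)

/-- Channel extracted from a joint state by disintegration. -/
def extr {X Y : Type*} [Fintype Y] (τ : X × Y → ℝ) : X → Y → ℝ :=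
  fun x y => τ (x, y) / M1 τ x

/-- Forward state transformation `c ≫ ω` along a channel. -/
def fwd {X Y : Type*} [Fintype X] (c : X → Y → ℝ) (ω : X → ℝ) : Y → ℝ :=
  fun y => ∑ x, ω x * c x y

/-- Parallel product of predicates `p ⊗ q`. -/
def tensor {X Y : Type*} (p : X → ℝ) (q : Y → ℝ) : X × Y → ℝ :=
  fun z => p z.1 * q z.2

/-- Classical Bayesian Inference Theorem, forward direction:
`M₂(τ|_{p ⊗ 1}) = extr(τ) ≫ (M₁(τ)|_p)`. -/
theorem classical_bayesian_inference_forward {X Y : Type*} [Fintype X] [Fintype Y]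
    (τ : X × Y → ℝ)
    (hτ : ∀ z, 0 ≤ τ z) (hτsum : ∑ z, τ z = 1)
    (hM : ∀ x, M1 τ x ≠ 0)
    (p : X → ℝ) (hp : ∀ x, 0 ≤ p x ∧ p x ≤ 1)
    (hv : valid τ (tensor p (fun _ => 1)) ≠ 0) :
    M2 (stCond τ (tensor p (fun _ => 1))) = fwd (extr τ) (stCond (M1 τ) p) := by
  have hVeq : valid τ (tensor p (fun _ => 1)) = valid (M1 τ) p := by
    simp only [valid, tensor, M1, mul_one]
    rw [Fintype.sum_prod_type]
    simp [Finset.sum_mul]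
  funext y
  simp only [M2, stCond, fwd, extr, tensor, mul_one, hVeq]
  refine Finset.sum_congr rfl fun x _ => ?_
  have := hM x
  rw [div_mul_div_comm, mul_comm (valid (M1 τ) p) (M1 τ x), mul_assoc, mul_div_mul_left _ _ this]
  ring

end
end

section
/- Classical Bayesian Inference Theorem, backward direction: Let X, Y be finite types and τ a state on X × Y with M₁(τ) everywhere nonzero, and let c := extr(τ). For a predicate q on Y with τ ⊨ (1 ⊗ q) ≠ 0, the first marginal of τ conditioned by 1 ⊗ q equals the first marginal conditioned by the backward-transformed predicate: M₁(τ|_{1 ⊗ q}) = M₁(τ)|_{c ≪ q}. -/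
noncomputable section

/-- Backward predicate transformation `c ≪ q` along a channel. -/
def bwd {X Y : Type*} [Fintype Y] (c : X → Y → ℝ) (q : Y → ℝ) : X → ℝ :=
  fun x => ∑ y, c x y * q y

/-!
Disintegrating `τ` as `τ (x, y) = M₁(τ)(x) · extr(τ)(x)(y)` shows that weighting the
marginal `M₁(τ)` by `extr(τ) ≪ q` is the same as marginalising `τ` weighted by `1 ⊗ q`.
Conditioning is that weighting followed by normalisation, and the two normalising
constants agree because each is the total mass of the same weighted marginal.
-/

open Finset

section Marginal

variable {X Y : Type*} [Fintype Y]

theorem M1_mul_bwd_extr (τ : X × Y → ℝ) (q : Y → ℝ) {x : X} (hx : M1 τ x ≠ 0) :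
    M1 τ x * bwd (extr τ) q x = M1 (fun z => τ z * tensor (fun _ => 1) q z) x := by
  simp only [bwd, extr, mul_sum, ← mul_assoc, mul_div_cancel₀ _ hx]
  simp only [M1, tensor, one_mul]

variable [Fintype X]

theorem valid_eq_sum_M1 (τ r : X × Y → ℝ) : valid τ r = ∑ x, M1 (fun z => τ z * r z) x :=
  Fintype.sum_prod_type _

theorem M1_stCond (τ r : X × Y → ℝ) (x : X) :
    M1 (stCond τ r) x = M1 (fun z => τ z * r z) x / valid τ r := by
  simp only [M1, stCond, sum_div]

theorem valid_M1_bwd_extr (τ : X × Y → ℝ) (hM : ∀ x, M1 τ x ≠ 0) (q : Y → ℝ) :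
    valid (M1 τ) (bwd (extr τ) q) = valid τ (tensor (fun _ => 1) q) := by
  rw [valid_eq_sum_M1]
  exact sum_congr rfl fun x _ => M1_mul_bwd_extr τ q (hM x)

end Marginal

theorem classical_bayesian_inference_backward_general {X Y : Type*} [Fintype X] [Fintype Y]
    (τ : X × Y → ℝ)
    (hM : ∀ x, M1 τ x ≠ 0)
    (q : Y → ℝ) :
    M1 (stCond τ (tensor (fun _ => 1) q)) = stCond (M1 τ) (bwd (extr τ) q) := by
  funext x
  rw [M1_stCond, stCond, valid_M1_bwd_extr τ hM, M1_mul_bwd_extr τ q (hM x)]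

/-- Classical Bayesian Inference Theorem, backward direction:
`M₁(τ|_{1 ⊗ q}) = M₁(τ)|_{extr(τ) ≪ q}`. -/
theorem classical_bayesian_inference_backward {X Y : Type*} [Fintype X] [Fintype Y]
    (τ : X × Y → ℝ)
    (hτ : ∀ z, 0 ≤ τ z) (hτsum : ∑ z, τ z = 1)
    (hM : ∀ x, M1 τ x ≠ 0)
    (q : Y → ℝ) (hq : ∀ y, 0 ≤ q y ∧ q y ≤ 1)
    (hv : valid τ (tensor (fun _ => 1) q) ≠ 0) :
    M1 (stCond τ (tensor (fun _ => 1) q)) = stCond (M1 τ) (bwd (extr τ) q) :=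
  classical_bayesian_inference_backward_general τ hM q

end
end

section
/- Lower and upper conditioning coincide with classical conditioning on diagonal states: Let ω be a state and p a predicate on Fin n with ∑_i ω i * p i ≠ 0, and let ω̂ := diagonal(ω) and p̂ := diagonal(p) be the associated diagonal complex matrices. Then (√p̂ * ω̂ * √p̂) / tr(ω̂ * p̂) = diagonal(ω|_p) = (√ω̂ * p̂ * √ω̂) / tr(ω̂ * p̂), where ω|_p (i) := ω i * p i / (∑_j ω j * p j) is the classical conditioned state. -/
open Matrix
open scoped ComplexOrder

/-- The positive semidefinite square root of a positive semidefinite matrix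
(as `Matrix.PosSemidef.sqrt` was defined in the older Mathlib). -/
noncomputable def Matrix.PosSemidef.sqrt {n 𝕜 : Type*} [Fintype n] [DecidableEq n] [RCLike 𝕜]
    {A : Matrix n n 𝕜} (hA : A.PosSemidef) : Matrix n n 𝕜 :=
  hA.1.eigenvectorUnitary.1 * diagonal ((↑) ∘ (√·) ∘ hA.1.eigenvalues) *
    (star hA.1.eigenvectorUnitary : Matrix n n 𝕜)

namespace Matrix

variable {ι 𝕜 : Type*} [Fintype ι] [DecidableEq ι] [RCLike 𝕜]

/-- The eigenvector matrix `U` has `U i j = 0` unless `f i` is the `j`-th eigenvalue, so it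
intertwines `diagonal (√f)` with the diagonal of the square roots of the eigenvalues. -/
theorem PosSemidef.sqrt_diagonal_ofReal (f : ι → ℝ)
    (hA : (diagonal fun i => (f i : 𝕜)).PosSemidef) :
    hA.sqrt = diagonal fun i => (√(f i) : 𝕜) := by
  set U := (hA.1.eigenvectorUnitary : Matrix ι ι 𝕜) with hU
  have hUU : star U * U = 1 := Unitary.coe_star_mul_self _
  have hUU' : U * star U = 1 := Unitary.coe_mul_star_self _
  have hAU : (diagonal fun i => (f i : 𝕜)) * U
      = U * diagonal (RCLike.ofReal ∘ hA.1.eigenvalues) := by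
    have hspec := hA.1.spectral_theorem
    rw [Unitary.conjStarAlgAut_apply] at hspec
    conv_lhs => rw [hspec]
    rw [mul_assoc, hUU, mul_one]
  have hvalue : ∀ i j, U i j ≠ 0 → f i = hA.1.eigenvalues j := by
    intro i j hij
    have h := congrFun (congrFun hAU i) j
    rw [diagonal_mul, mul_diagonal, mul_comm] at h
    simpa using mul_left_cancel₀ hij h
  have hsqrtU : (diagonal fun i => (√(f i) : 𝕜)) * U
      = U * diagonal (RCLike.ofReal ∘ (√·) ∘ hA.1.eigenvalues) := by
    ext i j
    rw [diagonal_mul, mul_diagonal]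
    by_cases hij : U i j = 0
    · simp [hij]
    · simp [hvalue i j hij, mul_comm]
  rw [PosSemidef.sqrt, ← hU, ← hsqrtU, mul_assoc, hUU', mul_one]

theorem diagonal_sqrt_mul_diagonal_mul_diagonal_sqrt {a : ι → ℝ} (ha : ∀ i, 0 ≤ a i) (b : ι → ℝ) :
    (diagonal fun i => (√(a i) : 𝕜)) * (diagonal fun i => (b i : 𝕜)) *
      (diagonal fun i => (√(a i) : 𝕜)) = diagonal fun i => ((a i * b i : ℝ) : 𝕜) := by
  simp only [diagonal_mul_diagonal]
  congr 1
  ext i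
  rw [mul_right_comm, ← RCLike.ofReal_mul, ← RCLike.ofReal_mul, Real.mul_self_sqrt (ha i)]

/-- Normalizing by the trace is the classical normalization; no case split on a zero trace is
needed since both sides then vanish (`0⁻¹ = 0` and `x / 0 = 0`). -/
theorem trace_mul_diagonal_inv_smul (a b : ι → ℝ) :
    ((diagonal fun i => (a i : 𝕜)) * diagonal fun i => (b i : 𝕜)).trace⁻¹ •
        (diagonal fun i => ((a i * b i : ℝ) : 𝕜))
      = diagonal fun i => ((a i * b i / ∑ j, a j * b j : ℝ) : 𝕜) := by
  rw [diagonal_mul_diagonal, trace_diagonal, ← diagonal_smul]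
  congr 1
  ext i
  simp [div_eq_inv_mul]

theorem PosSemidef.sqrt_mul_diagonal_mul_sqrt_normalized {a : ι → ℝ} (ha : ∀ i, 0 ≤ a i)
    (b : ι → ℝ) (hA : (diagonal fun i => (a i : 𝕜)).PosSemidef) :
    ((diagonal fun i => (a i : 𝕜)) * diagonal fun i => (b i : 𝕜)).trace⁻¹ •
        (hA.sqrt * (diagonal fun i => (b i : 𝕜)) * hA.sqrt)
      = diagonal fun i => ((a i * b i / ∑ j, a j * b j : ℝ) : 𝕜) := by
  rw [hA.sqrt_diagonal_ofReal, diagonal_sqrt_mul_diagonal_mul_diagonal_sqrt ha,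
    trace_mul_diagonal_inv_smul]

end Matrix

theorem diagonal_conditioning_classical_general {n : ℕ}
    (ω p : Fin n → ℝ)
    (hω : ∀ i, 0 ≤ ω i)
    (hp : ∀ i, 0 ≤ p i ∧ p i ≤ 1)
    (hωpsd : (Matrix.diagonal fun i => (ω i : ℂ)).PosSemidef)
    (hppsd : (Matrix.diagonal fun i => (p i : ℂ)).PosSemidef) :
    (((Matrix.diagonal fun i => (ω i : ℂ)) * (Matrix.diagonal fun i => (p i : ℂ))).trace)⁻¹
        • (hppsd.sqrt * (Matrix.diagonal fun i => (ω i : ℂ)) * hppsd.sqrt)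
      = (Matrix.diagonal fun i => ((ω i * p i / ∑ j, ω j * p j : ℝ) : ℂ)) ∧
    (((Matrix.diagonal fun i => (ω i : ℂ)) * (Matrix.diagonal fun i => (p i : ℂ))).trace)⁻¹
        • (hωpsd.sqrt * (Matrix.diagonal fun i => (p i : ℂ)) * hωpsd.sqrt)
      = (Matrix.diagonal fun i => ((ω i * p i / ∑ j, ω j * p j : ℝ) : ℂ)) := by
  refine ⟨?_, hωpsd.sqrt_mul_diagonal_mul_sqrt_normalized hω p⟩
  rw [trace_mul_comm]
  simp_rw [mul_comm (ω _) (p _)]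
  exact hppsd.sqrt_mul_diagonal_mul_sqrt_normalized (fun i => (hp i).1) ω

/-- On diagonal (classical) states, lower and upper quantum conditioning both
coincide with classical conditioning. -/
theorem diagonal_conditioning_classical {n : ℕ}
    (ω p : Fin n → ℝ)
    (hω : ∀ i, 0 ≤ ω i) (hωsum : ∑ i, ω i = 1)
    (hp : ∀ i, 0 ≤ p i ∧ p i ≤ 1)
    (hv : (∑ i, ω i * p i) ≠ 0)
    (hωpsd : (Matrix.diagonal fun i => (ω i : ℂ)).PosSemidef)
    (hppsd : (Matrix.diagonal fun i => (p i : ℂ)).PosSemidef) :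
    (((Matrix.diagonal fun i => (ω i : ℂ)) * (Matrix.diagonal fun i => (p i : ℂ))).trace)⁻¹
        • (hppsd.sqrt * (Matrix.diagonal fun i => (ω i : ℂ)) * hppsd.sqrt)
      = (Matrix.diagonal fun i => ((ω i * p i / ∑ j, ω j * p j : ℝ) : ℂ)) ∧
    (((Matrix.diagonal fun i => (ω i : ℂ)) * (Matrix.diagonal fun i => (p i : ℂ))).trace)⁻¹
        • (hωpsd.sqrt * (Matrix.diagonal fun i => (p i : ℂ)) * hωpsd.sqrt)
      = (Matrix.diagonal fun i => ((ω i * p i / ∑ j, ω j * p j : ℝ) : ℂ)) :=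
  diagonal_conditioning_classical_general ω p hω hp hωpsd hppsd
end
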